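/- arXiv:1203.6794 — 2 statements merged into one kernel-verified Lean document; each statement's English description precedes it below -/
import Mathlib

section
/- In the polynomial ring K[a,b,c,d,e,f,g] over a field K, let I_Q = (bc − ae, cd − ag, cf − ag, de − bg, ef − bg) and J = (ae − bc, ag − cf, bg − ef, d − f). Then J is a prime ideal and J equals the colon ideal I_Q : (a·b·c·d·e·f·g). -/
open MvPolynomial

-- Variables of `K[a,b,c,d,e,f,g]`, indexed by `Fin 7`:
-- `a = X 0`, `b = X 1`, `c = X 2`, `d = X 3`, `e = X 4`, `f = X 5`, `g = X 6`.

/-- The join-meet ideal `I_Q = (bc − ae, cd − ag, cf − ag, de − bg, ef − bg)` of the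
lattice `Q`. -/
noncomputable def IQ (K : Type*) [Field K] : Ideal (MvPolynomial (Fin 7) K) :=
  Ideal.span {X 1 * X 2 - X 0 * X 4, X 2 * X 3 - X 0 * X 6, X 2 * X 5 - X 0 * X 6,
    X 3 * X 4 - X 1 * X 6, X 4 * X 5 - X 1 * X 6}

/-- The ideal `J = (ae − bc, ag − cf, bg − ef, d − f)`. -/
noncomputable def JQ (K : Type*) [Field K] : Ideal (MvPolynomial (Fin 7) K) :=
  Ideal.span {X 0 * X 4 - X 1 * X 2, X 0 * X 6 - X 2 * X 5, X 1 * X 6 - X 4 * X 5,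
    X 3 - X 5}

/-!
Put `d` and `f` in the same place of the matrix `[[a, b, f], [c, e, g]]`. Then `J` is the kernel
of the monomial map sending the entry in row `i`, column `j` to `sᵢ tⱼ`, hence prime. Modulo `J`
the moves `ae ↔ bc`, `ag ↔ cf`, `bg ↔ ef` bring every monomial to a normal form that depends only
on its image, which gives the reverse inclusion. For the colon ideal: `I_Q ⊆ J`, `J` is prime and
does not contain `abcdefg`, while `J · abcdefg ⊆ I_Q` by direct computation.
-/

theorem Ideal.eq_ker_of_forall_mk_eq {R S F G : Type*} [CommRing R] [Semiring S]
    [FunLike F R S] [RingHomClass F R S] [FunLike G S R] [ZeroHomClass G S R]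
    {I : Ideal R} (f : F) (ψ : G) (hle : I ≤ RingHom.ker f)
    (hψ : ∀ p, Ideal.Quotient.mk I (ψ (f p)) = Ideal.Quotient.mk I p) :
    I = RingHom.ker f := by
  refine le_antisymm hle fun p hp => ?_
  rw [← Ideal.Quotient.eq_zero_iff_mem, ← hψ, RingHom.mem_ker.mp hp, map_zero, map_zero]

theorem Ideal.IsPrime.colon_span_singleton_le {R : Type*} [CommRing R] {I P : Ideal R}
    (hP : P.IsPrime) (hIP : I ≤ P) {m : R} (hm : m ∉ P) :
    I.colon (Ideal.span {m}) ≤ P := fun _ hp =>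
  (hP.mem_or_mem (hIP (Ideal.mem_colon_span_singleton.mp hp))).resolve_right hm

section NormalForm

variable {M : Type*} [CommMonoid M] (a b c e f g : M)

/-- The exponents of `a, b, f` and `c, e, g` form a `2 × 3` table; this is the monomial whose
table has second-row sum `q` and column sums `r, s, t`, with the second row filled greedily
from the left. -/
def segreNormalMonomial (q r s t : ℕ) : M :=
  let γ := min q r
  let δ := min (q - γ) s
  let ζ := q - γ - δ
  a ^ (r - γ) * b ^ (s - δ) * c ^ γ * e ^ δ * f ^ (t - ζ) * g ^ ζ

theorem segreNormalMonomial_margins {α β γ δ ε ζ : ℕ} (hae : α = 0 ∨ δ = 0)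
    (hag : α = 0 ∨ ζ = 0) (hbg : β = 0 ∨ ζ = 0) :
    segreNormalMonomial a b c e f g (γ + δ + ζ) (α + γ) (β + δ) (ε + ζ) =
      a ^ α * b ^ β * c ^ γ * e ^ δ * f ^ ε * g ^ ζ := by
  have hγ : min (γ + δ + ζ) (α + γ) = γ := by omega
  have hδ : min (γ + δ + ζ - γ) (β + δ) = δ := by omega
  simp only [segreNormalMonomial, hγ, hδ]
  congr <;> omega

theorem map_segreNormalMonomial {N F : Type*} [CommMonoid N] [FunLike F M N]
    [MonoidHomClass F M N] (φ : F) (q r s t : ℕ) :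
    φ (segreNormalMonomial a b c e f g q r s t) =
      segreNormalMonomial (φ a) (φ b) (φ c) (φ e) (φ f) (φ g) q r s t := by
  simp only [segreNormalMonomial, map_mul, map_pow]

variable {a b c e f g}

/-- Each move lowers `3α + β`, and a table admitting no move is in normal form. -/
theorem pow_mul_eq_segreNormalMonomial (hae : a * e = b * c) (hag : a * g = c * f)
    (hbg : b * g = e * f) (α β γ δ ε ζ : ℕ) :
    a ^ α * b ^ β * c ^ γ * e ^ δ * f ^ ε * g ^ ζ =
      segreNormalMonomial a b c e f g (γ + δ + ζ) (α + γ) (β + δ) (ε + ζ) := by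
  by_cases h_ae : 0 < α ∧ 0 < δ
  · obtain ⟨α, rfl⟩ : ∃ α', α = α' + 1 := ⟨α - 1, by omega⟩
    obtain ⟨δ, rfl⟩ : ∃ δ', δ = δ' + 1 := ⟨δ - 1, by omega⟩
    calc _ = a ^ α * b ^ β * c ^ γ * e ^ δ * f ^ ε * g ^ ζ * (a * e) := by
          simp only [pow_succ]; ac_rfl
      _ = a ^ α * b ^ (β + 1) * c ^ (γ + 1) * e ^ δ * f ^ ε * g ^ ζ := by
          rw [hae]; simp only [pow_succ]; ac_rfl
      _ = _ := pow_mul_eq_segreNormalMonomial hae hag hbg ..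
      _ = _ := by congr 1 <;> omega
  by_cases h_ag : 0 < α ∧ 0 < ζ
  · obtain ⟨α, rfl⟩ : ∃ α', α = α' + 1 := ⟨α - 1, by omega⟩
    obtain ⟨ζ, rfl⟩ : ∃ ζ', ζ = ζ' + 1 := ⟨ζ - 1, by omega⟩
    calc _ = a ^ α * b ^ β * c ^ γ * e ^ δ * f ^ ε * g ^ ζ * (a * g) := by
          simp only [pow_succ]; ac_rfl
      _ = a ^ α * b ^ β * c ^ (γ + 1) * e ^ δ * f ^ (ε + 1) * g ^ ζ := by
          rw [hag]; simp only [pow_succ]; ac_rfl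
      _ = _ := pow_mul_eq_segreNormalMonomial hae hag hbg ..
      _ = _ := by congr 1 <;> omega
  by_cases h_bg : 0 < β ∧ 0 < ζ
  · obtain ⟨β, rfl⟩ : ∃ β', β = β' + 1 := ⟨β - 1, by omega⟩
    obtain ⟨ζ, rfl⟩ : ∃ ζ', ζ = ζ' + 1 := ⟨ζ - 1, by omega⟩
    calc _ = a ^ α * b ^ β * c ^ γ * e ^ δ * f ^ ε * g ^ ζ * (b * g) := by
          simp only [pow_succ]; ac_rfl
      _ = a ^ α * b ^ β * c ^ γ * e ^ (δ + 1) * f ^ (ε + 1) * g ^ ζ := by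
          rw [hbg]; simp only [pow_succ]; ac_rfl
      _ = _ := pow_mul_eq_segreNormalMonomial hae hag hbg ..
      _ = _ := by congr 1 <;> omega
  exact (segreNormalMonomial_margins a b c e f g (by omega) (by omega) (by omega)).symm
termination_by 3 * α + β

end NormalForm

section Segre

variable (K : Type*) [Field K]

/-- `X 0, X 1` are the row variables `s₀, s₁` and `X 2, X 3, X 4` the column variables
`t₀, t₁, t₂`; the variables `a, …, g` go to the products `sᵢ tⱼ` of their positions in
`[[a, b, d = f], [c, e, g]]`. -/
noncomputable def segre : MvPolynomial (Fin 7) K →ₐ[K] MvPolynomial (Fin 5) K :=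
  aeval ![X 0 * X 2, X 0 * X 3, X 1 * X 2, X 0 * X 4, X 1 * X 3, X 0 * X 4, X 1 * X 4]

noncomputable def segreMargins (u : Fin 7 →₀ ℕ) : Fin 5 →₀ ℕ :=
  Finsupp.equivFunOnFinite.symm
    ![u 0 + u 1 + u 3 + u 5, u 2 + u 4 + u 6, u 0 + u 2, u 1 + u 4, u 3 + u 5 + u 6]

theorem segre_monomial (u : Fin 7 →₀ ℕ) (k : K) :
    segre K (monomial u k) = monomial (segreMargins u) k := by
  rw [segre, aeval_monomial, monomial_eq, Finsupp.prod_pow, Finsupp.prod_pow,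
    Fin.prod_univ_seven, Fin.prod_univ_five]
  simp only [segreMargins, Finsupp.coe_equivFunOnFinite_symm, Matrix.cons_val, algebraMap_eq]
  ring

noncomputable def segreNormalForm : MvPolynomial (Fin 5) K →ₗ[K] MvPolynomial (Fin 7) K :=
  (basisMonomials (Fin 5) K).constr K fun v =>
    segreNormalMonomial (X 0) (X 1) (X 2) (X 4) (X 5) (X 6) (v 1) (v 2) (v 3) (v 4)

theorem segreNormalForm_monomial (v : Fin 5 →₀ ℕ) (k : K) :
    segreNormalForm K (monomial v k) =
      k • segreNormalMonomial (X 0) (X 1) (X 2) (X 4) (X 5) (X 6) (v 1) (v 2) (v 3) (v 4) := by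
  have hv : monomial v k = k • basisMonomials (Fin 5) K v := by
    rw [coe_basisMonomials, smul_monomial, smul_eq_mul, mul_one]
  rw [hv, map_smul, segreNormalForm, Module.Basis.constr_basis]

theorem JQ_le_ker_segre : JQ K ≤ RingHom.ker (segre K) := by
  rw [JQ, Ideal.span_le]
  rintro p (rfl | rfl | rfl | rfl) <;> simp [segre] <;> ring

theorem mk_JQ_relations :
    Ideal.Quotient.mk (JQ K) (X 0) * Ideal.Quotient.mk (JQ K) (X 4) =
        Ideal.Quotient.mk (JQ K) (X 1) * Ideal.Quotient.mk (JQ K) (X 2) ∧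
      Ideal.Quotient.mk (JQ K) (X 0) * Ideal.Quotient.mk (JQ K) (X 6) =
        Ideal.Quotient.mk (JQ K) (X 2) * Ideal.Quotient.mk (JQ K) (X 5) ∧
      Ideal.Quotient.mk (JQ K) (X 1) * Ideal.Quotient.mk (JQ K) (X 6) =
        Ideal.Quotient.mk (JQ K) (X 4) * Ideal.Quotient.mk (JQ K) (X 5) ∧
      Ideal.Quotient.mk (JQ K) (X 3) = Ideal.Quotient.mk (JQ K) (X 5) := by
  simp only [← map_mul, Ideal.Quotient.eq]
  refine ⟨?_, ?_, ?_, ?_⟩ <;> exact Ideal.subset_span (by simp)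

theorem mk_JQ_segreNormalForm_segre (p : MvPolynomial (Fin 7) K) :
    Ideal.Quotient.mk (JQ K) (segreNormalForm K (segre K p)) = Ideal.Quotient.mk (JQ K) p := by
  induction p using MvPolynomial.induction_on' with
  | add p q hp hq => simp only [map_add, hp, hq]
  | monomial u k =>
    obtain ⟨hae, hag, hbg, hdf⟩ := mk_JQ_relations K
    rw [segre_monomial, segreNormalForm_monomial, smul_eq_C_mul, monomial_eq, Finsupp.prod_pow,
      Fin.prod_univ_seven, map_mul, map_mul, map_segreNormalMonomial]
    simp only [segreMargins, Finsupp.coe_equivFunOnFinite_symm, Matrix.cons_val, map_mul,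
      map_pow, hdf, ← pow_mul_eq_segreNormalMonomial hae hag hbg]
    ring

theorem JQ_eq_ker_segre : JQ K = RingHom.ker (segre K) :=
  Ideal.eq_ker_of_forall_mk_eq (segre K) (segreNormalForm K) (JQ_le_ker_segre K)
    (mk_JQ_segreNormalForm_segre K)

theorem JQ_isPrime : (JQ K).IsPrime :=
  JQ_eq_ker_segre K ▸ RingHom.ker_isPrime _

theorem prod_X_notMem_JQ :
    (X 0 * X 1 * X 2 * X 3 * X 4 * X 5 * X 6 : MvPolynomial (Fin 7) K) ∉ JQ K := by
  rw [JQ_eq_ker_segre, RingHom.mem_ker]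
  simp [segre, X_ne_zero]

theorem IQ_le_JQ : IQ K ≤ JQ K := by
  obtain ⟨hae, hag, hbg, hdf⟩ := mk_JQ_relations K
  rw [IQ, Ideal.span_le]
  rintro p (rfl | rfl | rfl | rfl | rfl) <;>
    rw [SetLike.mem_coe, ← Ideal.Quotient.eq_zero_iff_mem] <;> simp only [map_sub, map_mul]
  · linear_combination -hae
  · linear_combination Ideal.Quotient.mk (JQ K) (X 2) * hdf - hag
  · linear_combination -hag
  · linear_combination Ideal.Quotient.mk (JQ K) (X 4) * hdf - hbg
  · linear_combination -hbg

theorem JQ_le_colon :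
    JQ K ≤ (IQ K).colon
      (Ideal.span {(X 0 * X 1 * X 2 * X 3 * X 4 * X 5 * X 6 : MvPolynomial (Fin 7) K)}) := by
  have mem : ∀ p ∈ ({X 1 * X 2 - X 0 * X 4, X 2 * X 3 - X 0 * X 6, X 2 * X 5 - X 0 * X 6,
      X 3 * X 4 - X 1 * X 6, X 4 * X 5 - X 1 * X 6} : Set (MvPolynomial (Fin 7) K)), p ∈ IQ K :=
    fun p hp => Ideal.subset_span hp
  rw [JQ, Ideal.span_le]
  set m : MvPolynomial (Fin 7) K := X 0 * X 1 * X 2 * X 3 * X 4 * X 5 * X 6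
  rintro p (rfl | rfl | rfl | rfl) <;> rw [SetLike.mem_coe, Ideal.mem_colon_span_singleton]
  · convert (IQ K).mul_mem_left (-m) (mem (X 1 * X 2 - X 0 * X 4) (by simp)) using 1; ring
  · convert (IQ K).mul_mem_left (-m) (mem (X 2 * X 5 - X 0 * X 6) (by simp)) using 1; ring
  · convert (IQ K).mul_mem_left (-m) (mem (X 4 * X 5 - X 1 * X 6) (by simp)) using 1; ring
  · have hcd := (IQ K).mul_mem_left (X 0 * X 1 * X 3 * X 4 * X 5 * X 6)
      (sub_mem (mem (X 2 * X 3 - X 0 * X 6) (by simp)) (mem (X 2 * X 5 - X 0 * X 6) (by simp)))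
    convert hcd using 1; ring

end Segre

/-- **Example.** `J` is a prime ideal and `J = I_Q : (a·b·c·d·e·f·g)`. -/
theorem JQ_isPrime_and_eq_colon
    (K : Type*) [Field K] :
    (JQ K).IsPrime ∧
      JQ K = Submodule.colon (IQ K)
        (Ideal.span {(X 0 * X 1 * X 2 * X 3 * X 4 * X 5 * X 6 : MvPolynomial (Fin 7) K)}) :=
  ⟨JQ_isPrime K, le_antisymm (JQ_le_colon K)
    ((JQ_isPrime K).colon_span_singleton_le (IQ_le_JQ K) (prod_X_notMem_JQ K))⟩
end

section
/- For every 1 ≤ k ≤ n−1, the ideal I + (x_{k+1} − y_k) of S = K[x_1,…,x_n, y_1,…,y_n, z], generated by I = I_{L_k} together with the element x_{k+1} − y_k, is a radical ideal. -/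
open MvPolynomial

/-- The variable `x_i` (for `1 ≤ i ≤ n`) of the polynomial ring
`S = K[x_1,…,x_n, y_1,…,y_n, z]` in `2n+1` variables. -/
noncomputable def xv (K : Type*) [Field K] (n i : ℕ) :
    MvPolynomial (Fin n ⊕ Fin n ⊕ Unit) K :=
  if h : 1 ≤ i ∧ i ≤ n then X (Sum.inl ⟨i - 1, by omega⟩) else 0

/-- The variable `y_i` (for `1 ≤ i ≤ n`) of `S = K[x_1,…,x_n, y_1,…,y_n, z]`. -/
noncomputable def yv (K : Type*) [Field K] (n i : ℕ) :
    MvPolynomial (Fin n ⊕ Fin n ⊕ Unit) K :=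
  if h : 1 ≤ i ∧ i ≤ n then X (Sum.inr (Sum.inl ⟨i - 1, by omega⟩)) else 0

/-- The variable `z` of `S = K[x_1,…,x_n, y_1,…,y_n, z]`. -/
noncomputable def zv (K : Type*) [Field K] (n : ℕ) :
    MvPolynomial (Fin n ⊕ Fin n ⊕ Unit) K :=
  X (Sum.inr (Sum.inr ()))

/-- The join-meet ideal `I = I_{L_k} ⊆ K[x_1,…,x_n, y_1,…,y_n, z]`, generated by the binomials
`x_j·y_i − x_i·y_j` for `1 ≤ i < j ≤ n`, `z·x_j − x_k·y_j` for `k+1 ≤ j ≤ n`, and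
`z·y_i − x_i·y_{k+1}` for `1 ≤ i ≤ k`. -/
noncomputable def LkIdeal (K : Type*) [Field K] (n k : ℕ) :
    Ideal (MvPolynomial (Fin n ⊕ Fin n ⊕ Unit) K) :=
  Ideal.span
    ({f | ∃ i j : ℕ, 1 ≤ i ∧ i < j ∧ j ≤ n ∧
        f = xv K n j * yv K n i - xv K n i * yv K n j} ∪
      {f | ∃ j : ℕ, k + 1 ≤ j ∧ j ≤ n ∧
        f = zv K n * xv K n j - xv K n k * yv K n j} ∪
      {f | ∃ i : ℕ, 1 ≤ i ∧ i ≤ k ∧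
        f = zv K n * yv K n i - xv K n i * yv K n (k + 1)})

/-!
The substitution `z ↦ z + x_{k+1}` is an automorphism of `S` carrying `I + (x_{k+1} − y_k)` onto
the ideal `J` generated by the minors `x_j y_i − x_i y_j`, the form `x_{k+1} − y_k`, and the
monomials `z x_j` (`j > k`) and `z y_i` (`i ≤ k`). This `J` is an intersection of three primes:
the two ideals generated by the variables `x_1, …, x_n, y_1, …, y_k`, resp.
`x_{k+1}, …, x_n, y_1, …, y_n`, and the kernel of the monomial map `x_i ↦ s a_i`, `y_i ↦ t a_i`,
`z ↦ 0` into `K[v, s, t]`, where `a_k = s v_k`, `a_{k+1} = t v_k` and `a_i = v_i` otherwise.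

That kernel is `(minors, x_{k+1} − y_k, z)`: modulo it every monomial reduces to a standard one
(free of `z`, with all `x`-indices at most all `y`-indices, and meeting `x_{k+1}, y_{k+1}` only if
it has no `x` at all), and the map is injective on standard monomials. An element of all three
primes is then `a + z c` with `a ∈ (minors, x_{k+1} − y_k)` and `c` in both variable ideals, and
`z c ∈ J` monomial by monomial.
-/

namespace Finsupp

theorem exists_eq_add_single {σ : Type*} {m : σ →₀ ℕ} {a : σ} (h : m a ≠ 0) :
    ∃ m', m = m' + single a 1 :=
  ⟨m - single a 1,
    (tsub_add_cancel_of_le (single_le_iff.mpr (Nat.one_le_iff_ne_zero.mpr h))).symm⟩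

theorem exists_eq_add_single_add_single {σ : Type*} {m : σ →₀ ℕ} {a b : σ} (hab : a ≠ b)
    (ha : m a ≠ 0) (hb : m b ≠ 0) : ∃ m', m = m' + (single a 1 + single b 1) := by
  obtain ⟨m₁, rfl⟩ := exists_eq_add_single hb
  obtain ⟨m₂, rfl⟩ := exists_eq_add_single (a := a) (m := m₁) (by simpa [hab] using ha)
  exact ⟨m₂, add_assoc _ _ _⟩

end Finsupp

namespace MvPolynomial

variable {σ τ R : Type*}

section CommSemiring
variable [CommSemiring R]

theorem aeval_monomial_eq_monomial {θ : σ → MvPolynomial τ R} {w : σ → τ →₀ ℕ} {m : σ →₀ ℕ}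
    (h : ∀ v ∈ m.support, θ v = monomial (w v) 1) (c : R) :
    aeval θ (monomial m c) = monomial (Finsupp.linearCombination ℕ w m) c := by
  rw [aeval_monomial, Finsupp.linearCombination_apply, monomial_finsupp_sum_index, algebraMap_eq]
  congr 1
  refine Finset.prod_congr rfl fun v hv => ?_
  simp only [h v hv, monomial_pow, one_pow]

theorem X_mul_X_eq_monomial (a b : σ) :
    (X a * X b : MvPolynomial σ R) = monomial (Finsupp.single a 1 + Finsupp.single b 1) 1 := by
  rw [X, X, monomial_mul, one_mul]

theorem mul_monomial_mem_of_mul_X_mem {I : Ideal (MvPolynomial σ R)} {p : MvPolynomial σ R}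
    {m : σ →₀ ℕ} {v : σ} (hv : m v ≠ 0) (h : p * X v ∈ I) : p * monomial m 1 ∈ I := by
  obtain ⟨m₂, rfl⟩ := Finsupp.exists_eq_add_single hv
  rw [monomial_add_single, pow_one, mul_left_comm]
  exact Ideal.mul_mem_left _ _ h

end CommSemiring

section CommRing
variable [CommRing R]

theorem sub_aeval_mem {I : Ideal (MvPolynomial σ R)} {f : σ → MvPolynomial σ R}
    (h : ∀ v, X v - f v ∈ I) (p : MvPolynomial σ R) : p - aeval f p ∈ I := by
  have : (Ideal.Quotient.mkₐ R I).comp (aeval f) = Ideal.Quotient.mkₐ R I :=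
    algHom_ext fun v => by simpa using (Ideal.Quotient.eq.mpr (h v)).symm
  rw [← Ideal.Quotient.eq, ← Ideal.Quotient.mkₐ_eq_mk R, ← AlgHom.comp_apply, this]

theorem span_X_image_eq_ker (s : Set σ) [DecidablePred (· ∈ s)] :
    Ideal.span (X '' s : Set (MvPolynomial σ R)) =
      RingHom.ker (aeval fun v => if v ∈ s then 0 else X v :
        MvPolynomial σ R →ₐ[R] MvPolynomial σ R) := by
  refine le_antisymm (Ideal.span_le.mpr ?_) fun p hp => ?_
  · rintro _ ⟨v, hv, rfl⟩
    simp [hv]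
  · have := sub_aeval_mem (I := Ideal.span (X '' s)) (f := fun v => if v ∈ s then 0 else X v)
      (fun v => by
        split_ifs with hv
        · simpa using Ideal.subset_span (Set.mem_image_of_mem X hv)
        · simp) p
    rwa [RingHom.mem_ker.mp hp, sub_zero] at this

theorem X_mem_span_X_image_iff [Nontrivial R] {s : Set σ} {v : σ} :
    (X v : MvPolynomial σ R) ∈ Ideal.span (X '' s) ↔ v ∈ s := by
  classical
  simp [mem_ideal_span_X_image, support_X, Finsupp.single_apply]

theorem isPrime_span_X_image [IsDomain R] (s : Set σ) :
    (Ideal.span (X '' s : Set (MvPolynomial σ R))).IsPrime := by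
  classical
  rw [span_X_image_eq_ker]
  exact RingHom.ker_isPrime _

theorem mem_span_X_image_of_mul_X_mem [IsDomain R] {s : Set σ} {v : σ} (hv : v ∉ s)
    {c : MvPolynomial σ R} (h : c * X v ∈ Ideal.span (X '' s)) : c ∈ Ideal.span (X '' s) :=
  ((isPrime_span_X_image s).mem_or_mem h).resolve_right (mt X_mem_span_X_image_iff.mp hv)

theorem coeff_apply_of_injOn (F : MvPolynomial σ R →ₐ[R] MvPolynomial τ R) {P : Set (σ →₀ ℕ)}
    {e : (σ →₀ ℕ) → τ →₀ ℕ} (hF : ∀ m ∈ P, ∀ c, F (monomial m c) = monomial (e m) c)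
    (he : Set.InjOn e P) {q : MvPolynomial σ R} (hq : q ∈ restrictSupport R P) {m : σ →₀ ℕ}
    (hm : m ∈ P) : coeff (e m) (F q) = coeff m q := by
  classical
  rw [mem_restrictSupport_iff] at hq
  conv_lhs => rw [q.as_sum, map_sum]
  rw [coeff_sum, Finset.sum_eq_single m]
  · rw [hF m hm, coeff_monomial, if_pos rfl]
  · intro m' hm' hne
    rw [hF m' (hq hm'), coeff_monomial, if_neg fun h => hne (he (hq hm') hm h)]
  · intro hm'
    rw [notMem_support_iff.mp hm', map_zero, map_zero, coeff_zero]

theorem monomial_add_sub_monomial_add_mem {I : Ideal (MvPolynomial σ R)} (m : σ →₀ ℕ)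
    {u u' : σ →₀ ℕ} (h : monomial u (1 : R) - monomial u' 1 ∈ I) :
    monomial (m + u) (1 : R) - monomial (m + u') 1 ∈ I := by
  simpa [mul_sub, monomial_mul] using I.mul_mem_left (monomial m 1) h

theorem monomial_mem_sup_restrictSupport {I : Ideal (MvPolynomial σ R)} {P : Set (σ →₀ ℕ)}
    (μ : (σ →₀ ℕ) → ℕ)
    (h : ∀ m ∉ P, monomial m 1 ∈ I ∨ ∃ m', μ m' < μ m ∧ monomial m 1 - monomial m' 1 ∈ I)
    (m : σ →₀ ℕ) : monomial m (1 : R) ∈ I.restrictScalars R ⊔ restrictSupport R P := by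
  induction hμ : μ m using Nat.strong_induction_on generalizing m with
  | _ N ih =>
    by_cases hm : m ∈ P
    · exact Submodule.mem_sup_right (by simp [hm])
    obtain hI | ⟨m', hlt, hI⟩ := h m hm
    · exact Submodule.mem_sup_left hI
    · rw [← sub_add_cancel (monomial m 1) (monomial m' 1)]
      exact add_mem (Submodule.mem_sup_left hI) (ih _ (hμ ▸ hlt) m' rfl)

theorem ker_le_of_injOn (F : MvPolynomial σ R →ₐ[R] MvPolynomial τ R) {I : Ideal (MvPolynomial σ R)}
    {P : Set (σ →₀ ℕ)} {e : (σ →₀ ℕ) → τ →₀ ℕ} (hI : I ≤ RingHom.ker F)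
    (hF : ∀ m ∈ P, ∀ c, F (monomial m c) = monomial (e m) c) (he : Set.InjOn e P)
    (hP : ∀ m, monomial m (1 : R) ∈ I.restrictScalars R ⊔ restrictSupport R P) :
    RingHom.ker F ≤ I := by
  intro p hp
  have hsup : p ∈ I.restrictScalars R ⊔ restrictSupport R P := by
    rw [p.as_sum]
    refine Submodule.sum_mem _ fun m _ => ?_
    simpa [smul_monomial] using Submodule.smul_mem _ (coeff m p) (hP m)
  obtain ⟨a, ha, q, hq, rfl⟩ := Submodule.mem_sup.mp hsup
  have hFq : F q = 0 := by
    simpa [RingHom.mem_ker.mp (hI ha)] using RingHom.mem_ker.mp hp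
  suffices q = 0 by simpa [this] using ha
  ext m
  by_cases hm : m ∈ q.support
  · rw [← coeff_apply_of_injOn F hF he hq (hq hm), hFq]; rfl
  · simpa using hm

end CommRing

end MvPolynomial

namespace Ideal

theorem IsRadical.of_leftInverse {R S F G : Type*} [CommRing R] [CommRing S] [FunLike F R S]
    [RingHomClass F R S] [FunLike G S R] [RingHomClass G S R] {f : F} {g : G}
    (hgf : Function.LeftInverse g f) {I : Ideal R} {J : Ideal S} (hI : I ≤ J.comap f) (hJ : J ≤ I.comap g) (h : J.IsRadical) : I.IsRadical := by
  have : J.comap f = I := le_antisymm (fun y hy => by simpa [hgf y] using hJ hy) hI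
  exact this ▸ h.comap f

end Ideal

namespace LkIdeal

variable {K : Type*} [Field K] {n : ℕ}

-- Indices are `0`-based: the `x_{k+1} − y_k` of the statement is `𝐱 κ' − 𝐲 κ` with `κ = k − 1`,
-- `κ' = k`. `param` realises `x_i ↦ s a_i`, `y_i ↦ t a_i`, `z ↦ 0` in `𝕋 = K[v, s, t]`, with
-- `a_κ = s v_κ`, `a_κ' = t v_κ` and `a_i = v_i` otherwise.
local notation "𝕊" => MvPolynomial (Fin n ⊕ Fin n ⊕ Unit) K
local notation "𝕋" => MvPolynomial (Fin n ⊕ Bool) K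
local notation "𝐱" i:max => (X (Sum.inl i) : 𝕊)
local notation "𝐲" i:max => (X (Sum.inr (Sum.inl i)) : 𝕊)
local notation "𝐳" => (X (Sum.inr (Sum.inr ())) : 𝕊)
local notation "𝐯" i:max => (X (Sum.inl i) : 𝕋)
local notation "𝐬" => (X (Sum.inr false) : 𝕋)
local notation "𝐭" => (X (Sum.inr true) : 𝕋)

variable (K) in
noncomputable def minor (i j : Fin n) : 𝕊 := 𝐱 j * 𝐲 i - 𝐱 i * 𝐲 j

variable (K n) in
def minors : Set 𝕊 := {f | ∃ i j : Fin n, i < j ∧ f = minor K i j}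

variable (K) in
noncomputable def baseIdeal (κ κ' : Fin n) : Ideal 𝕊 :=
  Ideal.span (insert (𝐱 κ' - 𝐲 κ) (minors K n))

variable (K n) in
noncomputable def segre : 𝕊 →ₐ[K] 𝕋 :=
  aeval (Sum.elim (fun i => 𝐬 * 𝐯 i) (Sum.elim (fun i => 𝐭 * 𝐯 i) 0))

variable (K) in
noncomputable def glue (κ κ' : Fin n) : 𝕋 →ₐ[K] 𝕋 :=
  aeval (Sum.elim (fun i => if i = κ then 𝐬 * 𝐯 κ else if i = κ' then 𝐭 * 𝐯 κ else 𝐯 i)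
    (X ∘ Sum.inr))

variable (K) in
noncomputable def param (κ κ' : Fin n) : 𝕊 →ₐ[K] 𝕋 := (glue K κ κ').comp (segre K n)

variable (n) in
noncomputable def segreExp : Fin n ⊕ Fin n ⊕ Unit → (Fin n ⊕ Bool) →₀ ℕ :=
  Sum.elim (fun i => Finsupp.single (Sum.inr false) 1 + Finsupp.single (Sum.inl i) 1)
    (Sum.elim (fun i => Finsupp.single (Sum.inr true) 1 + Finsupp.single (Sum.inl i) 1) 0)

noncomputable def glueExp (κ κ' : Fin n) : Fin n ⊕ Bool → (Fin n ⊕ Bool) →₀ ℕ :=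
  Sum.elim (fun i => if i = κ then Finsupp.single (Sum.inr false) 1 + Finsupp.single (Sum.inl κ) 1
      else if i = κ' then Finsupp.single (Sum.inr true) 1 + Finsupp.single (Sum.inl κ) 1
      else Finsupp.single (Sum.inl i) 1)
    fun b => Finsupp.single (Sum.inr b) 1

theorem segre_monomial {m : (Fin n ⊕ Fin n ⊕ Unit) →₀ ℕ} (hm : m (Sum.inr (Sum.inr ())) = 0)
    (c : K) : segre K n (monomial m c) =
      monomial (Finsupp.linearCombination ℕ (segreExp n) m) c := by
  refine aeval_monomial_eq_monomial (fun v hv => ?_) c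
  rcases v with i | i | _
  · simp [segreExp, X_mul_X_eq_monomial]
  · simp [segreExp, X_mul_X_eq_monomial]
  · exact absurd hm (by simpa using hv)

theorem glue_monomial (κ κ' : Fin n) (w : (Fin n ⊕ Bool) →₀ ℕ) (c : K) :
    glue K κ κ' (monomial w c) = monomial (Finsupp.linearCombination ℕ (glueExp κ κ') w) c := by
  refine aeval_monomial_eq_monomial (fun v _ => ?_) c
  rcases v with i | b
  · simp only [Sum.elim_inl, glueExp]
    split_ifs <;> simp [X]
  · rfl

section Exponents

variable (m : (Fin n ⊕ Fin n ⊕ Unit) →₀ ℕ) (w : (Fin n ⊕ Bool) →₀ ℕ) {κ κ' : Fin n}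

theorem segreExp_inl (i : Fin n) :
    Finsupp.linearCombination ℕ (segreExp n) m (Sum.inl i) =
      m (Sum.inl i) + m (Sum.inr (Sum.inl i)) := by
  simp [Finsupp.linearCombination_apply, Finsupp.sum_fintype, Fintype.sum_sum_type, segreExp,
    Finsupp.single_apply]

theorem segreExp_inr_false :
    Finsupp.linearCombination ℕ (segreExp n) m (Sum.inr false) = ∑ i, m (Sum.inl i) := by
  simp [Finsupp.linearCombination_apply, Finsupp.sum_fintype, Fintype.sum_sum_type, segreExp]

theorem glueExp_apply (a : Fin n ⊕ Bool) :
    Finsupp.linearCombination ℕ (glueExp κ κ') w a = ∑ v, w v * glueExp κ κ' v a := by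
  simp [Finsupp.linearCombination_apply, Finsupp.sum_fintype]

theorem glueExp_inl_left (h : κ ≠ κ') :
    Finsupp.linearCombination ℕ (glueExp κ κ') w (Sum.inl κ) =
      w (Sum.inl κ) + w (Sum.inl κ') := by
  rw [glueExp_apply, Fintype.sum_sum_type, Fintype.sum_eq_add κ κ' h]
  · simp [glueExp, h.symm]
  · intro i hi
    simp [glueExp, hi]

theorem glueExp_inl_of_ne {i : Fin n} (h : i ≠ κ) (h' : i ≠ κ') :
    Finsupp.linearCombination ℕ (glueExp κ κ') w (Sum.inl i) = w (Sum.inl i) := by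
  rw [glueExp_apply, Fintype.sum_sum_type, Fintype.sum_eq_single i]
  · simp [glueExp, h, h']
  · intro j hj
    simp only [glueExp, Sum.elim_inl]
    split_ifs <;> simp_all [Finsupp.single_apply, eq_comm]

theorem glueExp_inr_false :
    Finsupp.linearCombination ℕ (glueExp κ κ') w (Sum.inr false) =
      w (Sum.inr false) + w (Sum.inl κ) := by
  rw [glueExp_apply, Fintype.sum_sum_type, Fintype.sum_eq_single κ]
  · simp [glueExp, add_comm]
  · intro i hi
    simp only [glueExp, Sum.elim_inl, if_neg hi]
    split_ifs <;> simp

end Exponents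

def IsSorted (m : (Fin n ⊕ Fin n ⊕ Unit) →₀ ℕ) : Prop :=
  ∀ i j : Fin n, i < j → m (Sum.inl j) = 0 ∨ m (Sum.inr (Sum.inl i)) = 0

theorem IsSorted.not_lt {m m' : (Fin n ⊕ Fin n ⊕ Unit) →₀ ℕ} (hm : IsSorted m)
    (hsum : ∑ j, m (Sum.inl j) = ∑ j, m' (Sum.inl j)) {i : Fin n}
    (hi : m (Sum.inl i) + m (Sum.inr (Sum.inl i)) = m' (Sum.inl i) + m' (Sum.inr (Sum.inl i)))
    (hlow : ∀ j < i, m (Sum.inl j) = m' (Sum.inl j)) : ¬ m (Sum.inl i) < m' (Sum.inl i) := by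
  intro hlt
  have hhigh : ∀ j, i < j → m (Sum.inl j) = 0 := fun j hj =>
    (hm i j hj).resolve_right (by omega)
  have hIio : ∑ j ∈ Finset.Iio i, m (Sum.inl j) = ∑ j ∈ Finset.Iio i, m' (Sum.inl j) :=
    Finset.sum_congr rfl fun j hj => hlow j (Finset.mem_Iio.mp hj)
  have hm_Iic : ∑ j ∈ Finset.Iic i, m (Sum.inl j) = ∑ j, m (Sum.inl j) :=
    Finset.sum_subset (Finset.subset_univ _) fun j _ hj => hhigh j (not_le.mp (by simpa using hj))
  have hm'_Iic : ∑ j ∈ Finset.Iic i, m' (Sum.inl j) ≤ ∑ j, m' (Sum.inl j) :=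
    Finset.sum_le_sum_of_subset (Finset.subset_univ _)
  rw [← Finset.sum_Iio_add_eq_sum_Iic] at hm_Iic hm'_Iic
  omega

theorem IsSorted.inl_eq {m m' : (Fin n ⊕ Fin n ⊕ Unit) →₀ ℕ} (hm : IsSorted m) (hm' : IsSorted m')
    (hsum : ∑ j, m (Sum.inl j) = ∑ j, m' (Sum.inl j))
    (hcol : ∀ i, m (Sum.inl i) + m (Sum.inr (Sum.inl i)) =
      m' (Sum.inl i) + m' (Sum.inr (Sum.inl i))) (i : Fin n) :
    m (Sum.inl i) = m' (Sum.inl i) := by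
  induction i using WellFoundedLT.induction with
  | _ i ih =>
    rcases lt_trichotomy (m (Sum.inl i)) (m' (Sum.inl i)) with h | h | h
    · exact absurd h (hm.not_lt hsum (hcol i) ih)
    · exact h
    · exact absurd h (hm'.not_lt hsum.symm (hcol i).symm fun j hj => (ih j hj).symm)

def IsStandard (κ' : Fin n) (m : (Fin n ⊕ Fin n ⊕ Unit) →₀ ℕ) : Prop :=
  m (Sum.inr (Sum.inr ())) = 0 ∧ IsSorted m ∧
    ((∀ i, m (Sum.inl i) = 0) ∨ (m (Sum.inl κ') = 0 ∧ m (Sum.inr (Sum.inl κ')) = 0))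

noncomputable def paramExp (κ κ' : Fin n) (m : (Fin n ⊕ Fin n ⊕ Unit) →₀ ℕ) :
    (Fin n ⊕ Bool) →₀ ℕ :=
  Finsupp.linearCombination ℕ (glueExp κ κ') (Finsupp.linearCombination ℕ (segreExp n) m)

theorem param_monomial (κ κ' : Fin n) {m : (Fin n ⊕ Fin n ⊕ Unit) →₀ ℕ}
    (hm : m (Sum.inr (Sum.inr ())) = 0) (c : K) :
    param K κ κ' (monomial m c) = monomial (paramExp κ κ' m) c := by
  rw [param, AlgHom.comp_apply, segre_monomial hm, glue_monomial, paramExp]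

theorem IsStandard.segreExp_eq_zero_or {κ' : Fin n} {m : (Fin n ⊕ Fin n ⊕ Unit) →₀ ℕ}
    (hm : IsStandard κ' m) :
    Finsupp.linearCombination ℕ (segreExp n) m (Sum.inr false) = 0 ∨
      Finsupp.linearCombination ℕ (segreExp n) m (Sum.inl κ') = 0 := by
  rw [segreExp_inr_false, segreExp_inl]
  rcases hm.2.2 with h | ⟨h, h'⟩
  · exact Or.inl (Finset.sum_eq_zero fun i _ => h i)
  · exact Or.inr (by rw [h, h'])

theorem injOn_paramExp {κ κ' : Fin n} (h : κ ≠ κ') :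
    Set.InjOn (paramExp κ κ') {m | IsStandard κ' m} := by
  intro m hm m' hm' heq
  have hu := congr($heq (Sum.inl κ))
  have hs := congr($heq (Sum.inr false))
  simp only [paramExp, glueExp_inl_left _ h, glueExp_inr_false] at hu hs
  have h0 := hm.segreExp_eq_zero_or
  have h0' := hm'.segreExp_eq_zero_or
  have hcol : ∀ i, Finsupp.linearCombination ℕ (segreExp n) m (Sum.inl i) =
      Finsupp.linearCombination ℕ (segreExp n) m' (Sum.inl i) := by
    intro i
    by_cases hi : i = κ
    · subst hi; omega
    by_cases hi' : i = κ'
    · subst hi'; omega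
    simpa [paramExp, glueExp_inl_of_ne _ hi hi'] using congr($heq (Sum.inl i))
  have hsum : Finsupp.linearCombination ℕ (segreExp n) m (Sum.inr false) =
      Finsupp.linearCombination ℕ (segreExp n) m' (Sum.inr false) := by
    have := hcol κ; omega
  simp only [segreExp_inl, segreExp_inr_false] at hcol hsum
  have hx := IsSorted.inl_eq hm.2.1 hm'.2.1 hsum hcol
  ext v
  rcases v with i | i | ⟨⟩
  · exact hx i
  · have := hcol i; have := hx i; omega
  · rw [hm.1, hm'.1]

theorem minor_mem_baseIdeal {κ κ' i j : Fin n} (h : i < j) : minor K i j ∈ baseIdeal K κ κ' :=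
  Ideal.subset_span (Set.mem_insert_of_mem _ ⟨i, j, h, rfl⟩)

theorem sub_mem_baseIdeal (κ κ' : Fin n) : 𝐱 κ' - 𝐲 κ ∈ baseIdeal K κ κ' :=
  Ideal.subset_span (Set.mem_insert _ _)

-- The `+ 1` makes trading any `x_i` for a `y` lower the weight.
variable (n) in
noncomputable def xWeight : ((Fin n ⊕ Fin n ⊕ Unit) →₀ ℕ) →+ ℕ :=
  Finsupp.weight (Sum.elim (fun i : Fin n => (i : ℕ) + 1) (0 : Fin n ⊕ Unit → ℕ))

theorem exists_reduction_of_not_isStandard (κ κ' : Fin n) {m : (Fin n ⊕ Fin n ⊕ Unit) →₀ ℕ}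
    (hm : ¬ IsStandard κ' m) :
    monomial m (1 : K) ∈ baseIdeal K κ κ' ⊔ Ideal.span {𝐳} ∨
      ∃ m', xWeight n m' < xWeight n m ∧
        monomial m 1 - monomial m' 1 ∈ baseIdeal K κ κ' ⊔ Ideal.span {𝐳} := by
  by_cases hz : m (Sum.inr (Sum.inr ())) ≠ 0
  · left
    obtain ⟨m₂, rfl⟩ := Finsupp.exists_eq_add_single hz
    rw [monomial_add_single, pow_one]
    exact Ideal.mul_mem_left _ _ (Ideal.mem_sup_right (Ideal.mem_span_singleton_self _))
  right
  by_cases hsort : IsSorted m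
  swap
  · simp only [IsSorted, not_forall, not_or] at hsort
    obtain ⟨i, j, hij, hxj, hyi⟩ := hsort
    obtain ⟨m₂, rfl⟩ := Finsupp.exists_eq_add_single_add_single (a := Sum.inl j)
      (b := Sum.inr (Sum.inl i)) (by simp) hxj hyi
    refine ⟨m₂ + (Finsupp.single (Sum.inl i) 1 + Finsupp.single (Sum.inr (Sum.inl j)) 1),
      by simpa [xWeight, Finsupp.weight_single] using hij, monomial_add_sub_monomial_add_mem _ ?_⟩
    rw [← X_mul_X_eq_monomial, ← X_mul_X_eq_monomial]
    exact Ideal.mem_sup_left (minor_mem_baseIdeal hij)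
  by_cases hx : m (Sum.inl κ') ≠ 0
  · obtain ⟨m₂, rfl⟩ := Finsupp.exists_eq_add_single hx
    exact ⟨m₂ + Finsupp.single (Sum.inr (Sum.inl κ)) 1, by simp [xWeight, Finsupp.weight_single],
      monomial_add_sub_monomial_add_mem _ (Ideal.mem_sup_left (sub_mem_baseIdeal κ κ'))⟩
  rw [not_not] at hz hx
  obtain ⟨i, hxi, hy⟩ : ∃ i, m (Sum.inl i) ≠ 0 ∧ m (Sum.inr (Sum.inl κ')) ≠ 0 := by
    simp only [IsStandard, hz, hsort, hx, true_and, not_or, not_forall] at hm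
    tauto
  have hi : i < κ' := lt_of_le_of_ne (not_lt.mp fun h => (hsort κ' i h).elim hxi hy)
    (by rintro rfl; exact hxi hx)
  obtain ⟨m₂, rfl⟩ := Finsupp.exists_eq_add_single_add_single (a := Sum.inl i)
    (b := Sum.inr (Sum.inl κ')) (by simp) hxi hy
  refine ⟨m₂ + (Finsupp.single (Sum.inr (Sum.inl i)) 1 + Finsupp.single (Sum.inr (Sum.inl κ)) 1),
    by simp [xWeight, Finsupp.weight_single], monomial_add_sub_monomial_add_mem _ ?_⟩
  rw [← X_mul_X_eq_monomial, ← X_mul_X_eq_monomial,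
    show 𝐱 i * 𝐲 κ' - 𝐲 i * 𝐲 κ = 𝐲 i * (𝐱 κ' - 𝐲 κ) - minor K i κ' by rw [minor]; ring]
  exact Ideal.mem_sup_left (sub_mem (Ideal.mul_mem_left _ _ (sub_mem_baseIdeal κ κ'))
    (minor_mem_baseIdeal hi))

theorem baseIdeal_le_ker_param {κ κ' : Fin n} (h : κ ≠ κ') :
    baseIdeal K κ κ' ≤ RingHom.ker (param K κ κ') := by
  rw [baseIdeal, Ideal.span_le]
  rintro _ (rfl | ⟨i, j, -, rfl⟩)
  · simp [param, segre, glue, h.symm]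
    ring
  · simp [param, segre, minor]
    ring

theorem param_X_z (κ κ' : Fin n) : param K κ κ' 𝐳 = 0 := by
  simp [param, segre]

theorem ker_param {κ κ' : Fin n} (h : κ ≠ κ') :
    RingHom.ker (param K κ κ') = baseIdeal K κ κ' ⊔ Ideal.span {𝐳} := by
  have hle : baseIdeal K κ κ' ⊔ Ideal.span {𝐳} ≤ RingHom.ker (param K κ κ') :=
    sup_le (baseIdeal_le_ker_param h) ((Ideal.span_singleton_le_iff_mem _).mpr (param_X_z κ κ'))
  exact le_antisymm (ker_le_of_injOn _ hle (fun m hm => param_monomial κ κ' hm.1)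
    (injOn_paramExp h) (monomial_mem_sup_restrictSupport (xWeight n)
      fun m hm => exists_reduction_of_not_isStandard κ κ' hm)) hle

def lowerVars (κ : Fin n) : Set (Fin n ⊕ Fin n ⊕ Unit) :=
  Set.range Sum.inl ∪ (Sum.inr ∘ Sum.inl) '' Set.Iic κ

def upperVars (κ' : Fin n) : Set (Fin n ⊕ Fin n ⊕ Unit) :=
  Sum.inl '' Set.Ici κ' ∪ Set.range (Sum.inr ∘ Sum.inl)

theorem baseIdeal_le_span_lowerVars (κ κ' : Fin n) :
    baseIdeal K κ κ' ≤ Ideal.span (X '' lowerVars κ) := by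
  have hx : ∀ i, 𝐱 i ∈ Ideal.span (X '' lowerVars κ) := fun i =>
    X_mem_span_X_image_iff.mpr (by simp [lowerVars])
  rw [baseIdeal, Ideal.span_le]
  rintro _ (rfl | ⟨i, j, -, rfl⟩)
  · exact sub_mem (hx κ') (X_mem_span_X_image_iff.mpr (by simp [lowerVars]))
  · exact sub_mem (Ideal.mul_mem_right _ _ (hx j)) (Ideal.mul_mem_right _ _ (hx i))

theorem baseIdeal_le_span_upperVars (κ κ' : Fin n) :
    baseIdeal K κ κ' ≤ Ideal.span (X '' upperVars κ') := by
  have hy : ∀ i, 𝐲 i ∈ Ideal.span (X '' upperVars κ') := fun i =>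
    X_mem_span_X_image_iff.mpr (by simp [upperVars])
  rw [baseIdeal, Ideal.span_le]
  rintro _ (rfl | ⟨i, j, -, rfl⟩)
  · exact sub_mem (X_mem_span_X_image_iff.mpr (by simp [upperVars])) (hy κ)
  · exact sub_mem (Ideal.mul_mem_left _ _ (hy i)) (Ideal.mul_mem_left _ _ (hy j))

variable (K) in
noncomputable def shiftedIdeal (κ κ' : Fin n) : Ideal 𝕊 :=
  baseIdeal K κ κ' ⊔ Ideal.span ((𝐳 * X ·) '' (lowerVars κ ∩ upperVars κ'))

theorem X_z_mul_X_mem_shiftedIdeal {κ κ' : Fin n} {v : Fin n ⊕ Fin n ⊕ Unit}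
    (hv : v ∈ lowerVars κ ∩ upperVars κ') : 𝐳 * X v ∈ shiftedIdeal K κ κ' :=
  Ideal.mem_sup_right (Ideal.subset_span ⟨v, hv, rfl⟩)

theorem X_z_mul_mem_shiftedIdeal {κ κ' : Fin n} (hκ : (κ' : ℕ) = κ + 1) {c : 𝕊}
    (hlow : c ∈ Ideal.span (X '' lowerVars κ)) (hup : c ∈ Ideal.span (X '' upperVars κ')) :
    𝐳 * c ∈ shiftedIdeal K κ κ' := by
  rw [mem_ideal_span_X_image] at hlow hup
  rw [c.as_sum, Finset.mul_sum]
  refine Ideal.sum_mem _ fun m hm => ?_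
  rw [← mul_one (coeff m c), ← C_mul_monomial, mul_left_comm]
  refine Ideal.mul_mem_left _ _ ?_
  obtain ⟨a, ha, hma⟩ := hlow m hm
  obtain ⟨b, hb, hmb⟩ := hup m hm
  by_cases ha' : a ∈ upperVars κ'
  · exact mul_monomial_mem_of_mul_X_mem hma (X_z_mul_X_mem_shiftedIdeal ⟨ha, ha'⟩)
  by_cases hb' : b ∈ lowerVars κ
  · exact mul_monomial_mem_of_mul_X_mem hmb (X_z_mul_X_mem_shiftedIdeal ⟨hb', hb⟩)
  obtain ⟨i, rfl, hi⟩ : ∃ i, a = Sum.inl i ∧ (i : ℕ) < κ' := by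
    rcases ha with ⟨i, rfl⟩ | ⟨i, -, rfl⟩
    · exact ⟨i, rfl, by simpa [upperVars] using ha'⟩
    · simp [upperVars] at ha'
  obtain ⟨j, rfl, hj⟩ : ∃ j, b = Sum.inr (Sum.inl j) ∧ (κ : ℕ) < j := by
    rcases hb with ⟨j, -, rfl⟩ | ⟨j, rfl⟩
    · simp [lowerVars] at hb'
    · exact ⟨j, rfl, by simpa [lowerVars] using hb'⟩
  obtain ⟨m₂, rfl⟩ := Finsupp.exists_eq_add_single_add_single (by simp) hma hmb
  have : 𝐳 * monomial (m₂ + (Finsupp.single (Sum.inl i) 1 +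
      Finsupp.single (Sum.inr (Sum.inl j)) 1)) 1 =
        monomial m₂ 1 * (𝐲 i * (𝐳 * 𝐱 j) - 𝐳 * minor K i j) := by
    simp only [← add_assoc, monomial_add_single, pow_one, minor]; ring
  rw [this]
  refine Ideal.mul_mem_left _ _ (sub_mem (Ideal.mul_mem_left _ _
    (X_z_mul_X_mem_shiftedIdeal ⟨by simp [lowerVars], by simp [upperVars]; omega⟩))
    (Ideal.mul_mem_left _ _ (Ideal.mem_sup_left (minor_mem_baseIdeal ?_))))
  rw [Fin.lt_def]; omega

theorem shiftedIdeal_eq {κ κ' : Fin n} (hκ : (κ' : ℕ) = κ + 1) :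
    shiftedIdeal K κ κ' = RingHom.ker (param K κ κ') ⊓ Ideal.span (X '' lowerVars κ) ⊓
      Ideal.span (X '' upperVars κ') := by
  have hne : κ ≠ κ' := by rintro rfl; omega
  refine le_antisymm (sup_le (le_inf (le_inf (baseIdeal_le_ker_param hne)
    (baseIdeal_le_span_lowerVars κ κ')) (baseIdeal_le_span_upperVars κ κ')) ?_) ?_
  · rw [Ideal.span_le]
    rintro _ ⟨v, ⟨hlow, hup⟩, rfl⟩
    exact ⟨⟨by simp [param_X_z], Ideal.mul_mem_left _ _ (X_mem_span_X_image_iff.mpr hlow)⟩,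
      Ideal.mul_mem_left _ _ (X_mem_span_X_image_iff.mpr hup)⟩
  rintro g ⟨⟨hker, hlow⟩, hup⟩
  rw [ker_param hne] at hker
  obtain ⟨a, ha, b, hb, rfl⟩ := Submodule.mem_sup.mp hker
  obtain ⟨c, rfl⟩ := Ideal.mem_span_singleton'.mp hb
  have hclow : c ∈ Ideal.span (X '' lowerVars κ) := mem_span_X_image_of_mul_X_mem
    (by simp [lowerVars]) ((add_mem_cancel_left (baseIdeal_le_span_lowerVars κ κ' ha)).mp hlow)
  have hcup : c ∈ Ideal.span (X '' upperVars κ') := mem_span_X_image_of_mul_X_mem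
    (by simp [upperVars]) ((add_mem_cancel_left (baseIdeal_le_span_upperVars κ κ' ha)).mp hup)
  rw [mul_comm]
  exact add_mem (Ideal.mem_sup_left ha) (X_z_mul_mem_shiftedIdeal hκ hclow hcup)

theorem shiftedIdeal_isRadical {κ κ' : Fin n} (hκ : (κ' : ℕ) = κ + 1) :
    (shiftedIdeal K κ κ').IsRadical := by
  rw [shiftedIdeal_eq hκ]
  exact ((RingHom.ker_isPrime _).isRadical.inf (isPrime_span_X_image _).isRadical).inf
    (isPrime_span_X_image _).isRadical

variable (K) in
noncomputable def binomialIdeal (κ κ' : Fin n) : Ideal 𝕊 :=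
  Ideal.span (minors K n ∪ (fun j => 𝐳 * 𝐱 j - 𝐱 κ * 𝐲 j) '' Set.Ici κ' ∪
    (fun i => 𝐳 * 𝐲 i - 𝐱 i * 𝐲 κ') '' Set.Iic κ)

theorem xv_add_one {i : ℕ} (h : i < n) : xv K n (i + 1) = X (Sum.inl ⟨i, h⟩) := by
  rw [xv, dif_pos ⟨by omega, h⟩]
  rfl

theorem yv_add_one {i : ℕ} (h : i < n) : yv K n (i + 1) = X (Sum.inr (Sum.inl ⟨i, h⟩)) := by
  rw [yv, dif_pos ⟨by omega, h⟩]
  rfl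

theorem LkIdeal_eq_binomialIdeal {κ κ' : Fin n} (hκ : (κ' : ℕ) = κ + 1) :
    LkIdeal K n κ' = binomialIdeal K κ κ' := by
  have hxκ : xv K n κ' = 𝐱 κ := by rw [hκ, xv_add_one κ.isLt]
  have hyκ' : yv K n (κ' + 1) = 𝐲 κ' := yv_add_one κ'.isLt
  refine congrArg Ideal.span (congrArg₂ (· ∪ ·) (congrArg₂ (· ∪ ·) ?_ ?_) ?_)
  · ext f
    constructor
    · rintro ⟨i, j, hi, hij, hj, rfl⟩
      obtain ⟨i, rfl⟩ : ∃ i', i = i' + 1 := ⟨i - 1, by omega⟩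
      obtain ⟨j, rfl⟩ : ∃ j', j = j' + 1 := ⟨j - 1, by omega⟩
      refine ⟨⟨i, by omega⟩, ⟨j, by omega⟩, by simp [Fin.lt_def]; omega, ?_⟩
      rw [xv_add_one, xv_add_one, yv_add_one, yv_add_one, minor]
    · rintro ⟨i, j, hij, rfl⟩
      refine ⟨(i : ℕ) + 1, (j : ℕ) + 1, by omega, Nat.add_lt_add_right hij 1, by omega, ?_⟩
      rw [xv_add_one j.isLt, xv_add_one i.isLt, yv_add_one i.isLt, yv_add_one j.isLt, minor]
  · ext f
    constructor
    · rintro ⟨j, hj, hjn, rfl⟩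
      obtain ⟨j, rfl⟩ : ∃ j', j = j' + 1 := ⟨j - 1, by omega⟩
      refine ⟨⟨j, by omega⟩, by simp [Fin.le_def]; omega, ?_⟩
      rw [zv, hxκ, xv_add_one, yv_add_one]
    · rintro ⟨j, hj, rfl⟩
      refine ⟨(j : ℕ) + 1, by have := Fin.le_def.mp hj; omega, by omega, ?_⟩
      rw [zv, hxκ, xv_add_one j.isLt, yv_add_one j.isLt]
  · ext f
    constructor
    · rintro ⟨i, hi, hik, rfl⟩
      obtain ⟨i, rfl⟩ : ∃ i', i = i' + 1 := ⟨i - 1, by omega⟩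
      refine ⟨⟨i, by omega⟩, by simp [Fin.le_def]; omega, ?_⟩
      rw [zv, hyκ', xv_add_one, yv_add_one]
    · rintro ⟨i, hi, rfl⟩
      refine ⟨(i : ℕ) + 1, by omega, by have := Fin.le_def.mp hi; omega, ?_⟩
      rw [zv, hyκ', xv_add_one i.isLt, yv_add_one i.isLt]

theorem LkIdeal_sup_eq {κ κ' : Fin n} (hκ : (κ' : ℕ) = κ + 1) :
    LkIdeal K n κ' ⊔ Ideal.span {xv K n (κ' + 1) - yv K n κ'} =
      binomialIdeal K κ κ' ⊔ Ideal.span {𝐱 κ' - 𝐲 κ} := by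
  have hy : yv K n κ' = 𝐲 κ := by rw [hκ, yv_add_one κ.isLt]
  rw [LkIdeal_eq_binomialIdeal hκ, xv_add_one κ'.isLt, hy]

variable (K) in
noncomputable def shift (c : 𝕊) :
    𝕊 →ₐ[K] 𝕊 :=
  aeval (Function.update X (Sum.inr (Sum.inr ())) (𝐳 + c))

section shift

variable (c : MvPolynomial (Fin n ⊕ Fin n ⊕ Unit) K)

@[simp]
theorem shift_X_inl (i : Fin n) : shift K c (𝐱 i) = 𝐱 i := by
  simp [shift]

@[simp]
theorem shift_X_inr_inl (i : Fin n) : shift K c (𝐲 i) = 𝐲 i := by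
  simp [shift]

@[simp]
theorem shift_X_z : shift K c 𝐳 = 𝐳 + c := by
  simp [shift]

@[simp]
theorem shift_minor (i j : Fin n) : shift K c (minor K i j) = minor K i j := by
  simp [minor]

end shift

theorem leftInverse_shift (κ' : Fin n) :
    Function.LeftInverse (shift K (-𝐱 κ')) (shift K (𝐱 κ')) := by
  have : (shift K (-𝐱 κ')).comp (shift K (𝐱 κ')) = AlgHom.id K _ :=
    algHom_ext fun v => by rcases v with i | i | ⟨⟨⟩⟩ <;> simp
  exact fun f => AlgHom.congr_fun this f

theorem binomialIdeal_sup_le_comap {κ κ' : Fin n} (hκ : (κ' : ℕ) = κ + 1) :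
    binomialIdeal K κ κ' ⊔ Ideal.span {𝐱 κ' - 𝐲 κ} ≤
      (shiftedIdeal K κ κ').comap (shift K (𝐱 κ')) := by
  have hbase : ∀ f ∈ baseIdeal K κ κ', f ∈ shiftedIdeal K κ κ' := fun f hf => Ideal.mem_sup_left hf
  refine sup_le (Ideal.span_le.mpr ?_) (Ideal.span_le.mpr ?_)
  · rintro _ ((⟨i, j, hij, rfl⟩ | ⟨j, hj, rfl⟩) | ⟨i, hi, rfl⟩)
    · simpa using hbase _ (minor_mem_baseIdeal hij)
    · have hκj : κ < j := Fin.lt_def.mpr (by have := Fin.le_def.mp hj; omega)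
      have : shift K (𝐱 κ') (𝐳 * 𝐱 j - 𝐱 κ * 𝐲 j) =
          𝐳 * 𝐱 j + (minor K κ j + 𝐱 j * (𝐱 κ' - 𝐲 κ)) := by
        simp [minor]; ring
      rw [SetLike.mem_coe, Ideal.mem_comap, this]
      exact add_mem
        (X_z_mul_X_mem_shiftedIdeal ⟨by simp [lowerVars], by simpa [upperVars] using hj⟩)
        (hbase _ (add_mem (minor_mem_baseIdeal hκj)
          (Ideal.mul_mem_left _ _ (sub_mem_baseIdeal κ κ'))))
    · have hiκ' : i < κ' := Fin.lt_def.mpr (by have := Fin.le_def.mp hi; omega)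
      have : shift K (𝐱 κ') (𝐳 * 𝐲 i - 𝐱 i * 𝐲 κ') = 𝐳 * 𝐲 i + minor K i κ' := by
        simp [minor]; ring
      rw [SetLike.mem_coe, Ideal.mem_comap, this]
      exact add_mem
        (X_z_mul_X_mem_shiftedIdeal ⟨by simpa [lowerVars] using hi, by simp [upperVars]⟩)
        (hbase _ (minor_mem_baseIdeal hiκ'))
  · rintro _ rfl
    simpa using hbase _ (sub_mem_baseIdeal κ κ')

theorem shiftedIdeal_le_comap {κ κ' : Fin n} (hκ : (κ' : ℕ) = κ + 1) :
    shiftedIdeal K κ κ' ≤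
      (binomialIdeal K κ κ' ⊔ Ideal.span {𝐱 κ' - 𝐲 κ}).comap (shift K (-𝐱 κ')) := by
  have hgen : ∀ f ∈ minors K n ∪ (fun j => 𝐳 * 𝐱 j - 𝐱 κ * 𝐲 j) '' Set.Ici κ' ∪
      (fun i => 𝐳 * 𝐲 i - 𝐱 i * 𝐲 κ') '' Set.Iic κ,
      f ∈ binomialIdeal K κ κ' ⊔ Ideal.span {𝐱 κ' - 𝐲 κ} := fun f hf =>
    Ideal.mem_sup_left (Ideal.subset_span hf)
  have hminor : ∀ {i j : Fin n}, i < j →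
      minor K i j ∈ binomialIdeal K κ κ' ⊔ Ideal.span {𝐱 κ' - 𝐲 κ} := fun hij =>
    hgen _ (Or.inl (Or.inl ⟨_, _, hij, rfl⟩))
  have hd : 𝐱 κ' - 𝐲 κ ∈ binomialIdeal K κ κ' ⊔ Ideal.span {𝐱 κ' - 𝐲 κ} :=
    Ideal.mem_sup_right (Ideal.mem_span_singleton_self _)
  refine sup_le (Ideal.span_le.mpr ?_) (Ideal.span_le.mpr ?_)
  · rintro _ (rfl | ⟨i, j, hij, rfl⟩)
    · simpa using hd
    · simpa using hminor hij
  · rintro _ ⟨v, ⟨hlow, hup⟩, rfl⟩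
    rw [SetLike.mem_coe, Ideal.mem_comap]
    rcases v with j | i | ⟨⟩
    · have hj : κ' ≤ j := by simpa [upperVars] using hup
      have hκj : κ < j := Fin.lt_def.mpr (by have := Fin.le_def.mp hj; omega)
      have : shift K (-𝐱 κ') (𝐳 * 𝐱 j) =
          (𝐳 * 𝐱 j - 𝐱 κ * 𝐲 j) - (minor K κ j + 𝐱 j * (𝐱 κ' - 𝐲 κ)) := by
        simp [minor]; ring
      rw [this]
      exact sub_mem (hgen _ (Or.inl (Or.inr ⟨j, hj, rfl⟩)))
        (add_mem (hminor hκj) (Ideal.mul_mem_left _ _ hd))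
    · have hi : i ≤ κ := by simpa [lowerVars] using hlow
      have hiκ' : i < κ' := Fin.lt_def.mpr (by have := Fin.le_def.mp hi; omega)
      have : shift K (-𝐱 κ') (𝐳 * 𝐲 i) = (𝐳 * 𝐲 i - 𝐱 i * 𝐲 κ') - minor K i κ' := by
        simp [minor]; ring
      rw [this]
      exact sub_mem (hgen _ (Or.inr ⟨i, hi, rfl⟩)) (hminor hiκ')
    · simp [lowerVars] at hlow

end LkIdeal

theorem LkIdeal_sup_isRadical_general (K : Type*) [Field K] (n k : ℕ)
    (hk1 : 1 ≤ k) (hk2 : k ≤ n - 1) :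
    (LkIdeal K n k ⊔ Ideal.span {xv K n (k + 1) - yv K n k}).IsRadical := by
  obtain ⟨κ, κ', rfl, hκ⟩ : ∃ κ κ' : Fin n, k = κ' ∧ (κ' : ℕ) = κ + 1 :=
    ⟨⟨k - 1, by omega⟩, ⟨k, by omega⟩, rfl, by simp; omega⟩
  rw [LkIdeal.LkIdeal_sup_eq hκ]
  exact (LkIdeal.shiftedIdeal_isRadical hκ).of_leftInverse (LkIdeal.leftInverse_shift κ')
    (LkIdeal.binomialIdeal_sup_le_comap hκ) (LkIdeal.shiftedIdeal_le_comap hκ)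

/-- **Lemma.** For every `1 ≤ k ≤ n−1`, the ideal `I_{L_k} + (x_{k+1} − y_k)` is radical. -/
theorem LkIdeal_sup_isRadical (K : Type*) [Field K] (n k : ℕ)
    (hn : 2 ≤ n) (hk1 : 1 ≤ k) (hk2 : k ≤ n - 1) :
    (LkIdeal K n k ⊔ Ideal.span {xv K n (k + 1) - yv K n k}).IsRadical :=
  LkIdeal_sup_isRadical_general K n k hk1 hk2
end
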